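/- arXiv:2511.15410 — 2 statements merged into one kernel-verified Lean document; each statement's English description precedes it below -/
import Mathlib

section
/- Under axioms (H1)–(H4), if h : A → X is a dagger monomorphism in C, then V(h) : V(A) → V(X) is an isometry of Hermitian spaces, its image M = {h ∘ u : u ∈ V(A)} is an orthoclosed subspace of V(X) with orthocomplement M⊥ = {u ∈ V(X) : h† ∘ u = 0}, and V(X) = M ⊕ M⊥. -/
universe v u

open CategoryTheory CategoryTheory.Limits

/-- A dagger structure on a category: an involutive contravariant
identity-on-objects endofunctor. -/
class DaggerStruct (C : Type u) [Category.{v} C] where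
  dag : ∀ {A B : C}, (A ⟶ B) → (B ⟶ A)
  dag_id : ∀ (A : C), dag (𝟙 A) = 𝟙 A
  dag_comp : ∀ {A B D : C} (f : A ⟶ B) (g : B ⟶ D), dag (f ≫ g) = dag g ≫ dag f
  dag_dag : ∀ {A B : C} (f : A ⟶ B), dag (dag f) = f

/-- `f` is a dagger monomorphism: `f† ∘ f = id`. -/
def IsDagMono {C : Type u} [Category.{v} C] [DaggerStruct C] {A B : C} (f : A ⟶ B) : Prop :=
  f ≫ DaggerStruct.dag f = 𝟙 A

/-- The canonical semiadditive addition induced by binary biproducts: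
`f + g = ∇ ∘ (f ⊕ g) ∘ Δ`. -/
noncomputable def daggerAdd {C : Type u} [Category.{v} C] [HasZeroMorphisms C] [HasBinaryBiproducts C]
    {X Y : C} (f g : X ⟶ Y) : X ⟶ Y :=
  biprod.lift (𝟙 X) (𝟙 X) ≫ biprod.map f g ≫ biprod.desc (𝟙 Y) (𝟙 Y)

/-- `I` is dagger simple: nonzero, and every nonzero dagger monomorphism into `I`
is a dagger isomorphism. -/
def DagSimple {C : Type u} [Category.{v} C] [HasZeroMorphisms C] [DaggerStruct C]
    (I : C) : Prop :=
  ¬ IsZero I ∧ ∀ {A : C} (f : A ⟶ I), f ≠ 0 → IsDagMono f → DaggerStruct.dag f ≫ f = 𝟙 I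


/-!
The complement `g` of `h` provided by (H3) yields the orthogonal decomposition
`h† ≫ h + g† ≫ g = 𝟙 X` (check it on the two colimit legs), so every point `w` splits as
`(w ≫ h†) ≫ h + (w ≫ g†) ≫ g`. Definiteness of the form `x ≫ x†`, which follows from (H4b)
because `I` is not zero, then identifies `M⊥` with the kernel of `h†` and `M⊥⊥` with `M`.
-/

open SemiadditiveOfBinaryBiproducts

attribute [local instance] addCommMonoidHomOfHasBinaryBiproducts

local postfix:max "†" => DaggerStruct.dag

section Dagger

variable {C : Type u} [Category.{v} C] [DaggerStruct C] {W A B X : C}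

open DaggerStruct

theorem IsDagMono.comp_comp_dag_comp {h : A ⟶ X} (hh : IsDagMono h) (u : W ⟶ A) (v : B ⟶ A) :
    (u ≫ h) ≫ (v ≫ h)† = u ≫ v† := by
  rw [dag_comp, Category.assoc, ← Category.assoc h, hh, Category.id_comp]

theorem IsDagMono.comp_comp_dag {h : A ⟶ X} (hh : IsDagMono h) (u : W ⟶ A) :
    (u ≫ h) ≫ h† = u := by
  rw [Category.assoc, hh, Category.comp_id]

variable [HasZeroMorphisms C]

theorem isZero_of_isDagMono_comp {s : W ⟶ A} {x : A ⟶ X} (hs : IsDagMono (s ≫ x))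
    (hx : x ≫ x† = 0) : IsZero W := by
  rw [IsZero.iff_id_eq_zero, ← hs, dag_comp, Category.assoc, ← Category.assoc x, hx,
    zero_comp, comp_zero]

theorem DaggerStruct.dag_zero : (0 : A ⟶ X)† = 0 :=
  calc (0 : A ⟶ X)† = ((0 : A ⟶ A) ≫ (0 : X ⟶ A)†)† := by rw [zero_comp]
    _ = 0 := by rw [dag_comp, dag_dag, zero_comp]

theorem comp_dag_eq_zero_comm {f : A ⟶ X} {g : B ⟶ X} : f ≫ g† = 0 ↔ g ≫ f† = 0 := by
  have key : ∀ {A B : C} (f : A ⟶ X) (g : B ⟶ X), f ≫ g† = 0 → g ≫ f† = 0 :=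
    fun f g hfg => by rw [← dag_dag g, ← dag_comp, hfg, dag_zero]
  exact ⟨key f g, key g f⟩

theorem forall_comp_dag_comp_eq_zero_iff (hdef : ∀ x : W ⟶ A, x ≫ x† = 0 → x = 0)
    (h : A ⟶ X) (w : W ⟶ X) : (∀ u : W ⟶ A, w ≫ (u ≫ h)† = 0) ↔ w ≫ h† = 0 := by
  simp only [dag_comp, ← Category.assoc]
  exact ⟨fun hw => hdef _ (hw _), fun hw u => by rw [hw, zero_comp]⟩

end Dagger

section Biproducts

variable {C : Type u} [Category.{v} C] [HasZeroMorphisms C] [HasBinaryBiproducts C]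

theorem daggerAdd_eq_add {X Y : C} (f g : X ⟶ Y) : daggerAdd f g = f + g := by
  rw [add_eq_left_addition, daggerAdd, ← Category.assoc]
  congr 1
  ext <;> simp

variable [DaggerStruct C] {W A B X : C} {h : A ⟶ X} {g : B ⟶ X}

open DaggerStruct

theorem dag_comp_self_add_dag_comp_self (hh : IsDagMono h) (hg : IsDagMono g)
    (horth : h ≫ g† = 0) (hc : IsColimit (BinaryCofan.mk h g)) :
    h† ≫ h + g† ≫ g = 𝟙 X := by
  have hgh : g ≫ h† = 0 := comp_dag_eq_zero_comm.mp horth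
  refine BinaryCofan.IsColimit.hom_ext hc ?_ ?_
  -- the cofan legs live over `(pair A B).obj _`; restating over `A`, `B` lets `comp_add` fire
  · change h ≫ _ = h ≫ _
    rw [comp_add, ← Category.assoc, ← Category.assoc, hh, horth, Category.id_comp, zero_comp,
      add_zero, Category.comp_id]
  · change g ≫ _ = g ≫ _
    rw [comp_add, ← Category.assoc, ← Category.assoc, hg, hgh, Category.id_comp, zero_comp,
      zero_add, Category.comp_id]

theorem eq_comp_dag_comp_add (hid : h† ≫ h + g† ≫ g = 𝟙 X) (w : W ⟶ X) :
    w = (w ≫ h†) ≫ h + (w ≫ g†) ≫ g := by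
  conv_lhs => rw [← Category.comp_id w, ← hid, comp_add]
  simp only [Category.assoc]

theorem existsUnique_comp_add (hh : IsDagMono h) (horth : h ≫ g† = 0)
    (hid : h† ≫ h + g† ≫ g = 𝟙 X) (w : W ⟶ X) :
    ∃! p : (W ⟶ A) × (W ⟶ X), p.2 ≫ h† = 0 ∧ w = p.1 ≫ h + p.2 := by
  have hgh : g ≫ h† = 0 := comp_dag_eq_zero_comm.mp horth
  refine ⟨(w ≫ h†, (w ≫ g†) ≫ g), ⟨by simp [hgh], eq_comp_dag_comp_add hid w⟩, ?_⟩
  rintro ⟨u, w'⟩ ⟨hw', rfl⟩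
  have hw'g : (u ≫ h + w') ≫ g† = w' ≫ g† := by
    rw [add_comp, Category.assoc, horth, comp_zero, zero_add]
  refine Prod.ext ?_ ?_
  · rw [add_comp, hh.comp_comp_dag, hw', add_zero]
  · dsimp only
    rw [hw'g]
    conv_lhs => rw [eq_comp_dag_comp_add hid w', hw', zero_comp, zero_add]

theorem exists_eq_comp_of_forall_comp_dag_eq_zero (horth : h ≫ g† = 0)
    (hid : h† ≫ h + g† ≫ g = 𝟙 X) (hdef : ∀ x : W ⟶ B, x ≫ x† = 0 → x = 0) (w : W ⟶ X)
    (hw : ∀ w' : W ⟶ X, w' ≫ h† = 0 → w ≫ w'† = 0) : ∃ u : W ⟶ A, w = u ≫ h := by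
  have hwg : w ≫ g† = 0 := by
    refine hdef _ ?_
    have := hw ((w ≫ g†) ≫ g) (by rw [Category.assoc, comp_dag_eq_zero_comm.mp horth, comp_zero])
    rwa [dag_comp, ← Category.assoc] at this
  refine ⟨w ≫ h†, ?_⟩
  conv_lhs => rw [eq_comp_dag_comp_add hid w, hwg, zero_comp, add_zero]

end Biproducts

theorem stmt_16_general {C : Type u} [Category.{v} C] [HasZeroMorphisms C]
    [HasBinaryBiproducts C] [DaggerStruct C]
    (H3 : ∀ (A X : C) (f : A ⟶ X), IsDagMono f →
      ∃ (B : C) (g : B ⟶ X), IsDagMono g ∧ f ≫ DaggerStruct.dag g = 0 ∧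
        Nonempty (IsColimit (BinaryCofan.mk f g)))
    (I : C) (hI : DagSimple I)
    (H4b : ∀ (A : C) (u : I ⟶ A), u ≠ 0 → ∃ h : I ⟶ I, IsIso h ∧ IsDagMono (h ≫ u))
    (A X : C) (h : A ⟶ X) (hmono : IsDagMono h) :
    -- V(h) is an isometry: it preserves the form
    (∀ u v : I ⟶ A, (u ≫ h) ≫ DaggerStruct.dag (v ≫ h) = u ≫ DaggerStruct.dag v) ∧
    -- M⊥ = ker V(h†): w ⊥ image V(h) iff h† ∘ w = 0
    (∀ w : I ⟶ X, (∀ u : I ⟶ A, w ≫ DaggerStruct.dag (u ≫ h) = 0) ↔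
        w ≫ DaggerStruct.dag h = 0) ∧
    -- V(X) = M ⊕ M⊥: every w decomposes uniquely as m + m' with m ∈ M, m' ∈ M⊥
    (∀ w : I ⟶ X, ∃! p : (I ⟶ A) × (I ⟶ X),
        p.2 ≫ DaggerStruct.dag h = 0 ∧ w = daggerAdd (p.1 ≫ h) p.2) ∧
    -- M is orthoclosed: M⊥⊥ ⊆ M
    (∀ w : I ⟶ X, (∀ w' : I ⟶ X, w' ≫ DaggerStruct.dag h = 0 →
        w ≫ DaggerStruct.dag w' = 0) → ∃ u : I ⟶ A, w = u ≫ h) := by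
  have hdef : ∀ {P : C} (x : I ⟶ P), x ≫ x† = 0 → x = 0 := fun x hx => by
    by_contra hx0
    obtain ⟨s, -, hs⟩ := H4b _ x hx0
    exact hI.1 (isZero_of_isDagMono_comp hs hx)
  obtain ⟨B, g, hg, horth, ⟨hc⟩⟩ := H3 A X h hmono
  have hid := dag_comp_self_add_dag_comp_self hmono hg horth hc
  simp only [daggerAdd_eq_add]
  exact ⟨hmono.comp_comp_dag_comp, forall_comp_dag_comp_eq_zero_iff hdef h,
    existsUnique_comp_add hmono horth hid,
    exists_eq_comp_of_forall_comp_dag_eq_zero horth hid hdef⟩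

/-- Under (H1)–(H4), a dagger monomorphism `h : A ⟶ X` induces an isometry
`V(h)` of Hermitian spaces; its image `M` is orthoclosed with orthocomplement
`M⊥ = {u : h† ∘ u = 0}`, and `V(X) = M ⊕ M⊥`. -/
theorem stmt_16 {C : Type u} [Category.{v} C] [HasZeroObject C] [HasZeroMorphisms C]
    [HasBinaryBiproducts C] [DaggerStruct C]
    (hbip : ∀ X Y : C, DaggerStruct.dag (biprod.inl : X ⟶ X ⊞ Y) = biprod.fst ∧
        DaggerStruct.dag (biprod.inr : Y ⟶ X ⊞ Y) = biprod.snd)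
    (H2 : ∀ (J : Type v) [Preorder J] [IsDirected J (· ≤ ·)] [Nonempty J] (F : J ⥤ C),
      (∀ (i j : J) (h : i ≤ j), IsDagMono (F.map (homOfLE h))) →
      ∃ (X : C) (c : ∀ j : J, F.obj j ⟶ X),
        (∀ j, IsDagMono (c j)) ∧
        (∀ (i j : J) (h : i ≤ j), F.map (homOfLE h) ≫ c j = c i) ∧
        (∀ (Y : C) (d : ∀ j : J, F.obj j ⟶ Y), (∀ j, IsDagMono (d j)) →
          (∀ (i j : J) (h : i ≤ j), F.map (homOfLE h) ≫ d j = d i) →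
          ∃! m : X ⟶ Y, IsDagMono m ∧ ∀ j, c j ≫ m = d j) ∧
        (∀ (Y : C) (f g : X ⟶ Y), (∀ j, c j ≫ f = c j ≫ g) → f = g))
    (H3 : ∀ (A X : C) (f : A ⟶ X), IsDagMono f →
      ∃ (B : C) (g : B ⟶ X), IsDagMono g ∧ f ≫ DaggerStruct.dag g = 0 ∧
        Nonempty (IsColimit (BinaryCofan.mk f g)))
    (I : C) (hI : DagSimple I)
    (H4a : ∀ A : C, ¬ IsZero A → ∃ u : I ⟶ A, u ≠ 0)
    (H4b : ∀ (A : C) (u : I ⟶ A), u ≠ 0 → ∃ h : I ⟶ I, IsIso h ∧ IsDagMono (h ≫ u))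
    (A X : C) (h : A ⟶ X) (hmono : IsDagMono h) :
    -- V(h) is an isometry: it preserves the form
    (∀ u v : I ⟶ A, (u ≫ h) ≫ DaggerStruct.dag (v ≫ h) = u ≫ DaggerStruct.dag v) ∧
    -- M⊥ = ker V(h†): w ⊥ image V(h) iff h† ∘ w = 0
    (∀ w : I ⟶ X, (∀ u : I ⟶ A, w ≫ DaggerStruct.dag (u ≫ h) = 0) ↔
        w ≫ DaggerStruct.dag h = 0) ∧
    -- V(X) = M ⊕ M⊥: every w decomposes uniquely as m + m' with m ∈ M, m' ∈ M⊥
    (∀ w : I ⟶ X, ∃! p : (I ⟶ A) × (I ⟶ X),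
        p.2 ≫ DaggerStruct.dag h = 0 ∧ w = daggerAdd (p.1 ≫ h) p.2) ∧
    -- M is orthoclosed: M⊥⊥ ⊆ M
    (∀ w : I ⟶ X, (∀ w' : I ⟶ X, w' ≫ DaggerStruct.dag h = 0 →
        w ≫ DaggerStruct.dag w' = 0) → ∃ u : I ⟶ A, w = u ≫ h) :=
  stmt_16_general H3 I hI H4b A X h hmono
end

section
/- Under axioms (H1)–(H4), for every object X ∈ C and every orthoclosed subspace M of the Hermitian space V(X), there exists a dagger biproduct A →h_A X ←h_B B in C with M = image V(h_A) and M⊥ = image V(h_B); moreover V(h_A ∘ h_A†) is the orthogonal projection of V(X) onto M. Consequently V(X) is an orthomodular space: every orthoclosed subspace is splitting. -/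
universe v u

open CategoryTheory CategoryTheory.Limits

/-!
Choose, by Zorn's lemma, a maximal orthonormal subset `E` of `M = S⊥`. The finite biproducts
`I ⊞ ⋯ ⊞ I` indexed by finite subsets of `E`, mapped into `X` by the members of `E`, form a
directed diagram of dagger monomorphisms; by (H2) its colimit is a dagger monomorphism
`hA : A ⟶ X` through which every member of `E` factors and which is orthogonal to `S`. By (H3)
it has a dagger complement `hB`, so every `w : I ⟶ X` splits as
`(w ≫ hA†) ≫ hA + (w ≫ hB†) ≫ hB`. For `w ∈ M` the second summand lies in `M` and is orthogonal
to `E`; if it were nonzero, (H4) would normalize it into a vector extending `E`. Hence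
`M = image V(hA)`, and definiteness of the form (again from (H4)) gives `M⊥ = image V(hB)`.
-/

section DaggerAdd

variable {C : Type u} [Category.{v} C] [HasZeroMorphisms C] [HasBinaryBiproducts C]

lemma daggerAdd_comp {X Y Z : C} (f g : X ⟶ Y) (h : Y ⟶ Z) :
    daggerAdd f g ≫ h = daggerAdd (f ≫ h) (g ≫ h) := by
  have key : biprod.map f g ≫ biprod.desc (𝟙 Y) (𝟙 Y) ≫ h
      = biprod.map (f ≫ h) (g ≫ h) ≫ biprod.desc (𝟙 Z) (𝟙 Z) := by
    apply biprod.hom_ext' <;> simp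
  simp only [daggerAdd, Category.assoc, key]

lemma comp_daggerAdd {X Y Z : C} (h : Z ⟶ X) (f g : X ⟶ Y) :
    h ≫ daggerAdd f g = daggerAdd (h ≫ f) (h ≫ g) := by
  have key : (h ≫ biprod.lift (𝟙 X) (𝟙 X)) ≫ biprod.map f g
      = biprod.lift (𝟙 Z) (𝟙 Z) ≫ biprod.map (h ≫ f) (h ≫ g) := by
    apply biprod.hom_ext <;> simp
  simp only [daggerAdd, ← Category.assoc, key]

lemma daggerAdd_zero {X Y : C} (f : X ⟶ Y) : daggerAdd f 0 = f := by
  have key : biprod.lift (𝟙 X) (𝟙 X) ≫ biprod.map f (0 : X ⟶ Y) = f ≫ biprod.inl := by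
    apply biprod.hom_ext <;> simp
  rw [daggerAdd, ← Category.assoc, key, Category.assoc, biprod.inl_desc, Category.comp_id]

lemma zero_daggerAdd {X Y : C} (f : X ⟶ Y) : daggerAdd 0 f = f := by
  have key : biprod.lift (𝟙 X) (𝟙 X) ≫ biprod.map (0 : X ⟶ Y) f = f ≫ biprod.inr := by
    apply biprod.hom_ext <;> simp
  rw [daggerAdd, ← Category.assoc, key, Category.assoc, biprod.inr_desc, Category.comp_id]

end DaggerAdd

namespace DaggerStruct

variable {C : Type u} [Category.{v} C]

section Basic

variable [DaggerStruct C]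

lemma isDagMono_comp_dag {A B X : C} {f : A ⟶ X} {g : B ⟶ X} (hf : IsDagMono f)
    (hfg : f ≫ dag g ≫ g = f) : IsDagMono (f ≫ dag g) := by
  rw [IsDagMono, dag_comp, dag_dag, Category.assoc, reassoc_of% hfg]
  exact hf

variable (C) in
/-- Axiom (H2). -/
def HasDirectedDagMonoColimits : Prop :=
  ∀ (J : Type v) [Preorder J] [IsDirected J (· ≤ ·)] [Nonempty J] (F : J ⥤ C),
    (∀ (i j : J) (h : i ≤ j), IsDagMono (F.map (homOfLE h))) →
    ∃ (X : C) (c : ∀ j : J, F.obj j ⟶ X),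
      (∀ j, IsDagMono (c j)) ∧
      (∀ (i j : J) (h : i ≤ j), F.map (homOfLE h) ≫ c j = c i) ∧
      (∀ (Y : C) (d : ∀ j : J, F.obj j ⟶ Y), (∀ j, IsDagMono (d j)) →
        (∀ (i j : J) (h : i ≤ j), F.map (homOfLE h) ≫ d j = d i) →
        ∃! m : X ⟶ Y, IsDagMono m ∧ ∀ j, c j ≫ m = d j) ∧
      (∀ (Y : C) (f g : X ⟶ Y), (∀ j, c j ≫ f = c j ≫ g) → f = g)

variable [HasZeroMorphisms C]

def IsOrthonormal {A X : C} (E : Set (A ⟶ X)) : Prop :=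
  (∀ e ∈ E, IsDagMono e) ∧ E.Pairwise fun e e' => e ≫ dag e' = 0

lemma IsOrthonormal.toList_map_val {A X : C} {E : Set (A ⟶ X)} (hE : IsOrthonormal E)
    (T : Finset E) : (∀ e ∈ T.toList.map Subtype.val, IsDagMono e) ∧
      (T.toList.map Subtype.val).Pairwise fun e e' => e ≫ dag e' = 0 := by
  refine ⟨fun _ he => ?_, List.pairwise_map.mpr (T.nodup_toList.imp fun hne => ?_)⟩
  · obtain ⟨e, -, rfl⟩ := List.mem_map.mp he
    exact hE.1 e e.2
  · exact hE.2 (Subtype.prop _) (Subtype.prop _) (Subtype.coe_ne_coe.mpr hne)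

/-- The orthogonal complement `S⊥` in the Hermitian space `V(X) = Hom(I, X)`,
whose form is `⟨u, v⟩ = v† ∘ u`. -/
def orth {I X : C} (S : Set (I ⟶ X)) : Set (I ⟶ X) :=
  {w | ∀ s ∈ S, w ≫ dag s = 0}

lemma eq_zero_of_comp_dag_self_eq_zero {I Z : C} (hI : ¬IsZero I)
    (hnorm : ∀ (Z : C) (u : I ⟶ Z), u ≠ 0 → ∃ h : I ⟶ I, IsDagMono (h ≫ u))
    {q : I ⟶ Z} (hq : q ≫ dag q = 0) : q = 0 := by
  by_contra hne
  obtain ⟨h, hh⟩ := hnorm Z q hne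
  have hh' : (h ≫ q) ≫ dag (h ≫ q) = 𝟙 I := hh
  rw [dag_comp, Category.assoc, reassoc_of% hq, zero_comp, comp_zero] at hh'
  exact hI ((IsZero.iff_id_eq_zero I).mpr hh'.symm)

lemma exists_maximal_orthonormal_subset {I X : C} (M : Set (I ⟶ X)) :
    ∃ E, Maximal (fun E => IsOrthonormal E ∧ E ⊆ M) E := by
  refine zorn_subset _ fun c hc hchain =>
    ⟨⋃₀ c, ⟨⟨?_, ?_⟩, ?_⟩, fun _ hs => Set.subset_sUnion_of_mem hs⟩
  · rintro e ⟨E, hE, he⟩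
    exact (hc hE).1.1 e he
  · exact (Set.pairwise_sUnion hchain.directedOn).mpr fun E hE => (hc hE).1.2
  · exact Set.sUnion_subset fun E hE => (hc hE).2

variable [HasZeroObject C]

open ZeroObject in
lemma dag_zero_s17 {A B : C} : dag (0 : A ⟶ B) = 0 := by
  rw [← zero_comp (X := A) (Y := 0) (Z := B) (f := 0), dag_comp,
    (isZero_zero C).eq_of_tgt (dag (0 : 0 ⟶ B)) 0, zero_comp]

lemma comp_dag_eq_zero_symm {A B X : C} {f : A ⟶ X} {g : B ⟶ X} (h : f ≫ dag g = 0) :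
    g ≫ dag f = 0 := by
  simpa only [dag_comp, dag_dag, dag_zero_s17] using congrArg dag h

end Basic

section Biprod

variable [DaggerStruct C] [HasZeroMorphisms C] [HasBinaryBiproducts C]

variable (C) in
/-- Axiom (H1). -/
def BiprodIsDagger : Prop :=
  ∀ X Y : C, dag (biprod.inl : X ⟶ X ⊞ Y) = biprod.fst ∧ dag (biprod.inr : Y ⟶ X ⊞ Y) = biprod.snd

lemma dag_biprod_desc (hbip : BiprodIsDagger C) {P Q Z : C} (p : P ⟶ Z) (q : Q ⟶ Z) :
    dag (biprod.desc p q) = biprod.lift (dag p) (dag q) := by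
  apply biprod.hom_ext
  · rw [biprod.lift_fst, ← (hbip P Q).1, ← dag_comp, biprod.inl_desc]
  · rw [biprod.lift_snd, ← (hbip P Q).2, ← dag_comp, biprod.inr_desc]

end Biprod

section ListBiprod

open ZeroObject

variable [HasZeroObject C] [HasZeroMorphisms C] [HasBinaryBiproducts C] {A X : C}

noncomputable def listBiprod : List (A ⟶ X) → C
  | [] => 0
  | _ :: t => A ⊞ listBiprod t

noncomputable def listDesc : (l : List (A ⟶ X)) → listBiprod l ⟶ X
  | [] => 0
  | e :: t => biprod.desc e (listDesc t)

lemma listDesc_comp_eq_zero {Y : C} {k : X ⟶ Y} :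
    ∀ {l : List (A ⟶ X)}, (∀ e ∈ l, e ≫ k = 0) → listDesc l ≫ k = 0
  | [], _ => zero_comp
  | e :: t, h => by
    rw [List.forall_mem_cons] at h
    show biprod.desc e (listDesc t) ≫ k = 0
    apply biprod.hom_ext' <;> simp [h.1, listDesc_comp_eq_zero h.2]

variable [DaggerStruct C]

lemma comp_dag_listDesc_eq_zero {Z : C} {f : Z ⟶ X} {l : List (A ⟶ X)}
    (h : ∀ e ∈ l, f ≫ dag e = 0) : f ≫ dag (listDesc l) = 0 :=
  comp_dag_eq_zero_symm (listDesc_comp_eq_zero fun e he => comp_dag_eq_zero_symm (h e he))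

variable (hbip : BiprodIsDagger C)
include hbip

lemma listDesc_isDagMono : ∀ {l : List (A ⟶ X)}, (∀ e ∈ l, IsDagMono e) →
    l.Pairwise (fun e e' => e ≫ dag e' = 0) → IsDagMono (listDesc l)
  | [], _, _ => (isZero_zero C).eq_of_src _ _
  | e :: t, hmono, horth => by
    rw [List.forall_mem_cons] at hmono
    rw [List.pairwise_cons] at horth
    have het : e ≫ dag (listDesc t) = 0 := comp_dag_listDesc_eq_zero horth.1
    have hte : listDesc t ≫ dag e = 0 := comp_dag_eq_zero_symm het
    have hee : e ≫ dag e = 𝟙 A := hmono.1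
    have htt : listDesc t ≫ dag (listDesc t) = 𝟙 _ := listDesc_isDagMono hmono.2 horth.2
    show biprod.desc e (listDesc t) ≫ dag (biprod.desc e (listDesc t)) = 𝟙 (A ⊞ listBiprod t)
    rw [dag_biprod_desc hbip]
    apply biprod.hom_ext' <;> apply biprod.hom_ext <;> simp [het, hte, hee, htt]

lemma comp_dag_listDesc_comp_listDesc : ∀ {l : List (A ⟶ X)}, (∀ e ∈ l, IsDagMono e) →
    l.Pairwise (fun e e' => e ≫ dag e' = 0) → ∀ {e : A ⟶ X}, e ∈ l →
      e ≫ dag (listDesc l) ≫ listDesc l = e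
  | a :: t, hmono, horth, e, he => by
    rw [List.forall_mem_cons] at hmono
    rw [List.pairwise_cons] at horth
    show e ≫ dag (biprod.desc a (listDesc t)) ≫ biprod.desc a (listDesc t) = e
    rw [dag_biprod_desc hbip]
    by_cases hea : e = a
    · subst hea
      have het : e ≫ dag (listDesc t) = 0 := comp_dag_listDesc_eq_zero horth.1
      have hee : e ≫ dag e = 𝟙 A := hmono.1
      have hlift : e ≫ biprod.lift (dag e) (dag (listDesc t)) = biprod.inl := by
        apply biprod.hom_ext <;> simp [hee, het]
      rw [reassoc_of% hlift, biprod.inl_desc]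
    · have het : e ∈ t := (List.mem_cons.mp he).resolve_left hea
      have hea' : e ≫ dag a = 0 := comp_dag_eq_zero_symm (horth.1 e het)
      have hlift : e ≫ biprod.lift (dag a) (dag (listDesc t)) =
          (e ≫ dag (listDesc t)) ≫ biprod.inr := by
        apply biprod.hom_ext <;> simp [hea']
      rw [reassoc_of% hlift, biprod.inr_desc,
        comp_dag_listDesc_comp_listDesc hmono.2 horth.2 het]

lemma listDesc_comp_dag_comp_listDesc {l' : List (A ⟶ X)} (hmono : ∀ e ∈ l', IsDagMono e)
    (horth : l'.Pairwise (fun e e' => e ≫ dag e' = 0)) :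
    ∀ {l : List (A ⟶ X)}, l ⊆ l' → listDesc l ≫ dag (listDesc l') ≫ listDesc l' = listDesc l
  | [], _ => zero_comp
  | e :: t, hsub => by
    rw [List.cons_subset] at hsub
    show biprod.desc e (listDesc t) ≫ _ = biprod.desc e (listDesc t)
    apply biprod.hom_ext' <;> simp only [biprod.inl_desc_assoc, biprod.inl_desc,
      biprod.inr_desc_assoc, biprod.inr_desc]
    · exact comp_dag_listDesc_comp_listDesc hbip hmono horth hsub.1
    · exact listDesc_comp_dag_comp_listDesc hmono horth hsub.2

end ListBiprod

section Span

variable [DaggerStruct C] [HasZeroObject C] [HasZeroMorphisms C] [HasBinaryBiproducts C]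

variable {A X : C} {E : Set (A ⟶ X)}

noncomputable def finsetDesc (T : Finset E) : listBiprod (T.toList.map Subtype.val) ⟶ X :=
  listDesc (T.toList.map Subtype.val)

variable (hE : IsOrthonormal E)
include hE

variable (hbip : BiprodIsDagger C)
include hbip

lemma finsetDesc_isDagMono (T : Finset E) : IsDagMono (finsetDesc T) :=
  listDesc_isDagMono hbip (hE.toList_map_val T).1 (hE.toList_map_val T).2

lemma comp_dag_finsetDesc_comp_finsetDesc {T : Finset E} {e : E} (he : e ∈ T) :
    (e : A ⟶ X) ≫ dag (finsetDesc T) ≫ finsetDesc T = e :=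
  comp_dag_listDesc_comp_listDesc hbip (hE.toList_map_val T).1 (hE.toList_map_val T).2
    (List.mem_map_of_mem (Finset.mem_toList.mpr he))

lemma finsetDesc_comp_dag_comp_finsetDesc {T T' : Finset E} (h : T ⊆ T') :
    finsetDesc T ≫ dag (finsetDesc T') ≫ finsetDesc T' = finsetDesc T :=
  listDesc_comp_dag_comp_listDesc hbip (hE.toList_map_val T').1 (hE.toList_map_val T').2
    (List.map_subset _ fun _ hx => Finset.mem_toList.mpr (h (Finset.mem_toList.mp hx)))

-- Routing the transition maps through `X` spares us inclusions between biproducts indexed by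
-- differently ordered lists.
noncomputable def spanDiagram : Finset E ⥤ C where
  obj T := listBiprod (T.toList.map Subtype.val)
  map {_ T'} _ := finsetDesc _ ≫ dag (finsetDesc T')
  map_id T := finsetDesc_isDagMono hE hbip T
  map_comp f g := by
    rw [Category.assoc, reassoc_of% (finsetDesc_comp_dag_comp_finsetDesc hE hbip (leOfHom f))]

theorem IsOrthonormal.exists_dagMono_span (H2 : HasDirectedDagMonoColimits C) :
    ∃ (H : C) (h : H ⟶ X), IsDagMono h ∧ (∀ e ∈ E, ∃ u : A ⟶ H, e = u ≫ h) ∧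
      ∀ {Y : C} (k : X ⟶ Y), (∀ e ∈ E, e ≫ k = 0) → h ≫ k = 0 := by
  classical
  obtain ⟨H, c, -, -, huniv, hjoint⟩ := H2 (Finset E) (spanDiagram hE hbip) fun _ _ hTT' =>
    isDagMono_comp_dag (finsetDesc_isDagMono hE hbip _)
      (finsetDesc_comp_dag_comp_finsetDesc hE hbip hTT')
  obtain ⟨h, ⟨hmono, hc⟩, -⟩ := huniv X finsetDesc (finsetDesc_isDagMono hE hbip)
    fun _ _ hTT' => by
      rw [← finsetDesc_comp_dag_comp_finsetDesc hE hbip hTT']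
      exact Category.assoc _ _ _
  refine ⟨H, h, hmono, fun e he => ?_, fun {Y} k hk => ?_⟩
  · let T : Finset E := {⟨e, he⟩}
    refine ⟨e ≫ dag (finsetDesc T) ≫ c T, ?_⟩
    erw [Category.assoc, Category.assoc, hc]
    exact (comp_dag_finsetDesc_comp_finsetDesc hE hbip
      (Finset.mem_singleton_self (⟨e, he⟩ : E))).symm
  · refine hjoint Y _ _ fun T => ?_
    rw [reassoc_of% (hc T), comp_zero]
    refine listDesc_comp_eq_zero fun _ he => ?_
    obtain ⟨e, -, rfl⟩ := List.mem_map.mp he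
    exact hk e e.2

end Span

section Complement

variable [DaggerStruct C] [HasZeroObject C] [HasZeroMorphisms C]

structure IsDagBiprod {A B X : C} (hA : A ⟶ X) (hB : B ⟶ X) : Prop where
  isDagMono_left : IsDagMono hA
  isDagMono_right : IsDagMono hB
  comp_dag_eq_zero : hA ≫ dag hB = 0
  isColimit : Nonempty (IsColimit (BinaryCofan.mk hA hB))

namespace IsDagBiprod

variable {A B X : C} {hA : A ⟶ X} {hB : B ⟶ X} (h : IsDagBiprod hA hB)
include h

lemma symm : IsDagBiprod hB hA :=
  ⟨h.isDagMono_right, h.isDagMono_left, comp_dag_eq_zero_symm h.comp_dag_eq_zero,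
    ⟨BinaryCofan.isColimitFlip h.isColimit.some⟩⟩

variable [HasBinaryBiproducts C]

lemma daggerAdd_eq_id : daggerAdd (dag hA ≫ hA) (dag hB ≫ hB) = 𝟙 X := by
  have hBA : hB ≫ dag hA = 0 := h.symm.comp_dag_eq_zero
  apply BinaryCofan.IsColimit.hom_ext h.isColimit.some
  · change hA ≫ _ = hA ≫ 𝟙 X
    rw [comp_daggerAdd, ← Category.assoc, ← Category.assoc, h.isDagMono_left,
      h.comp_dag_eq_zero, Category.id_comp, zero_comp, daggerAdd_zero, Category.comp_id]
  · change hB ≫ _ = hB ≫ 𝟙 X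
    rw [comp_daggerAdd, ← Category.assoc, ← Category.assoc, h.isDagMono_right, hBA,
      Category.id_comp, zero_comp, zero_daggerAdd, Category.comp_id]

lemma eq_daggerAdd {Z : C} (w : Z ⟶ X) :
    w = daggerAdd ((w ≫ dag hA) ≫ hA) ((w ≫ dag hB) ≫ hB) := by
  conv_lhs => rw [← Category.comp_id w, ← h.daggerAdd_eq_id]
  rw [comp_daggerAdd, ← Category.assoc, ← Category.assoc]

lemma comp_dag_right_eq_zero_iff {Z : C} (w : Z ⟶ X) :
    w ≫ dag hB = 0 ↔ ∃ u : Z ⟶ A, w = u ≫ hA := by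
  refine ⟨fun hw => ⟨w ≫ dag hA, ?_⟩, ?_⟩
  · conv_lhs => rw [h.eq_daggerAdd w]
    rw [hw, zero_comp, daggerAdd_zero]
  · rintro ⟨u, rfl⟩
    rw [Category.assoc, h.comp_dag_eq_zero, comp_zero]

lemma forall_comp_dag_comp_eq_zero_iff {I : C} (hdef : ∀ q : I ⟶ A, q ≫ dag q = 0 → q = 0)
    (w : I ⟶ X) : (∀ u : I ⟶ A, w ≫ dag (u ≫ hA) = 0) ↔ ∃ v : I ⟶ B, w = v ≫ hB := by
  rw [← h.symm.comp_dag_right_eq_zero_iff]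
  refine ⟨fun hw => hdef _ ?_, fun hw u => ?_⟩
  · simpa only [dag_comp, dag_dag, Category.assoc] using hw (w ≫ dag hA)
  · rw [dag_comp, reassoc_of% hw, zero_comp]

end IsDagBiprod

lemma eq_zero_of_maximal_orthonormal {I X : C} (hI : ¬IsZero I)
    (hnorm : ∀ (Z : C) (u : I ⟶ Z), u ≠ 0 → ∃ h : I ⟶ I, IsDagMono (h ≫ u))
    {S E : Set (I ⟶ X)} (hE : Maximal (fun E => IsOrthonormal E ∧ E ⊆ orth S) E)
    {w : I ⟶ X} (hw : w ∈ orth S) (hwE : ∀ e ∈ E, w ≫ dag e = 0) : w = 0 := by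
  by_contra hne
  obtain ⟨h, hh⟩ := hnorm X w hne
  have hE₀ : ∀ e ∈ E, (h ≫ w) ≫ dag e = 0 := fun e he => by
    rw [Category.assoc, hwE e he, comp_zero]
  have hnotin : h ≫ w ∉ E := fun hmem =>
    hI ((IsZero.iff_id_eq_zero I).mpr ((hh : (h ≫ w) ≫ dag (h ≫ w) = 𝟙 I).symm.trans
      (hE₀ _ hmem)))
  refine hnotin (hE.mem_of_prop_insert ⟨⟨?_, ?_⟩, ?_⟩)
  · rintro e (rfl | he)
    exacts [hh, hE.1.1.1 e he]
  · exact Set.pairwise_insert.mpr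
      ⟨hE.1.1.2, fun e he _ => ⟨hE₀ e he, comp_dag_eq_zero_symm (hE₀ e he)⟩⟩
  · exact Set.insert_subset_iff.mpr
      ⟨fun s hs => by rw [Category.assoc, hw s hs, comp_zero], hE.1.2⟩

lemma mem_orth_iff_of_maximal [HasBinaryBiproducts C] {I X A B : C} (hI : ¬IsZero I)
    (hnorm : ∀ (Z : C) (u : I ⟶ Z), u ≠ 0 → ∃ h : I ⟶ I, IsDagMono (h ≫ u))
    {S E : Set (I ⟶ X)} (hE : Maximal (fun E => IsOrthonormal E ∧ E ⊆ orth S) E)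
    {hA : A ⟶ X} {hB : B ⟶ X} (hAB : IsDagBiprod hA hB) (hEA : ∀ e ∈ E, ∃ u, e = u ≫ hA)
    (hAS : ∀ s ∈ S, hA ≫ dag s = 0) (w : I ⟶ X) :
    w ∈ orth S ↔ ∃ u : I ⟶ A, w = u ≫ hA := by
  refine ⟨fun hw => (hAB.comp_dag_right_eq_zero_iff w).mp ?_, ?_⟩
  · set wB := (w ≫ dag hB) ≫ hB
    have hwB : wB = 0 := by
      refine eq_zero_of_maximal_orthonormal hI hnorm hE (fun s hs => ?_) fun e he => ?_
      · calc wB ≫ dag s = daggerAdd (((w ≫ dag hA) ≫ hA) ≫ dag s) (wB ≫ dag s) := by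
              rw [Category.assoc _ hA, hAS s hs, comp_zero, zero_daggerAdd]
          _ = w ≫ dag s := by rw [← daggerAdd_comp, ← hAB.eq_daggerAdd]
          _ = 0 := hw s hs
      · obtain ⟨u, rfl⟩ := hEA e he
        rw [dag_comp, Category.assoc, reassoc_of% hAB.symm.comp_dag_eq_zero, zero_comp,
          comp_zero]
    have hBB : hB ≫ dag hB = 𝟙 B := hAB.isDagMono_right
    rw [← Category.comp_id (w ≫ dag hB), ← hBB, ← Category.assoc]
    change wB ≫ dag hB = 0
    rw [hwB, zero_comp]
  · rintro ⟨u, rfl⟩ s hs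
    rw [Category.assoc, hAS s hs, comp_zero]

end Complement

end DaggerStruct

open DaggerStruct in
theorem stmt_17_general {C : Type u} [Category.{v} C] [HasZeroObject C] [HasZeroMorphisms C]
    [HasBinaryBiproducts C] [DaggerStruct C]
    (hbip : ∀ X Y : C, DaggerStruct.dag (biprod.inl : X ⟶ X ⊞ Y) = biprod.fst ∧
        DaggerStruct.dag (biprod.inr : Y ⟶ X ⊞ Y) = biprod.snd)
    (H2 : ∀ (J : Type v) [Preorder J] [IsDirected J (· ≤ ·)] [Nonempty J] (F : J ⥤ C),
      (∀ (i j : J) (h : i ≤ j), IsDagMono (F.map (homOfLE h))) →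
      ∃ (X : C) (c : ∀ j : J, F.obj j ⟶ X),
        (∀ j, IsDagMono (c j)) ∧
        (∀ (i j : J) (h : i ≤ j), F.map (homOfLE h) ≫ c j = c i) ∧
        (∀ (Y : C) (d : ∀ j : J, F.obj j ⟶ Y), (∀ j, IsDagMono (d j)) →
          (∀ (i j : J) (h : i ≤ j), F.map (homOfLE h) ≫ d j = d i) →
          ∃! m : X ⟶ Y, IsDagMono m ∧ ∀ j, c j ≫ m = d j) ∧
        (∀ (Y : C) (f g : X ⟶ Y), (∀ j, c j ≫ f = c j ≫ g) → f = g))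
    (H3 : ∀ (A X : C) (f : A ⟶ X), IsDagMono f →
      ∃ (B : C) (g : B ⟶ X), IsDagMono g ∧ f ≫ DaggerStruct.dag g = 0 ∧
        Nonempty (IsColimit (BinaryCofan.mk f g)))
    (I : C) (hI : DagSimple I)
    (H4b : ∀ (A : C) (u : I ⟶ A), u ≠ 0 → ∃ h : I ⟶ I, IsIso h ∧ IsDagMono (h ≫ u))
    (X : C) (S : Set (I ⟶ X)) :
    ∃ (A B : C) (hA : A ⟶ X) (hB : B ⟶ X),
      -- A →hA X ←hB B is a dagger biproduct
      IsDagMono hA ∧ IsDagMono hB ∧ hA ≫ DaggerStruct.dag hB = 0 ∧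
      Nonempty (IsColimit (BinaryCofan.mk hA hB)) ∧
      -- M = S⊥ = image V(hA)
      (∀ w : I ⟶ X, (∀ s ∈ S, w ≫ DaggerStruct.dag s = 0) ↔ ∃ u : I ⟶ A, w = u ≫ hA) ∧
      -- M⊥ = image V(hB)
      (∀ w : I ⟶ X,
        (∀ m : I ⟶ X, (∀ s ∈ S, m ≫ DaggerStruct.dag s = 0) → w ≫ DaggerStruct.dag m = 0)
          ↔ ∃ v : I ⟶ B, w = v ≫ hB) ∧
      -- V(hA ∘ hA†) is the orthogonal projection onto M:
      -- it fixes M and annihilates M⊥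
      (∀ u : I ⟶ A, (u ≫ hA) ≫ (DaggerStruct.dag hA ≫ hA) = u ≫ hA) ∧
      (∀ w : I ⟶ X, w ≫ DaggerStruct.dag hA = 0 → w ≫ (DaggerStruct.dag hA ≫ hA) = 0) ∧
      -- splitting (orthomodularity): V(X) = M ⊕ M⊥
      (∀ w : I ⟶ X, ∃ (u : I ⟶ A) (v : I ⟶ B),
        w = daggerAdd (u ≫ hA) (v ≫ hB)) := by
  have hnorm : ∀ (Z : C) (u : I ⟶ Z), u ≠ 0 → ∃ h : I ⟶ I, IsDagMono (h ≫ u) :=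
    fun Z u hu => (H4b Z u hu).imp fun _ hh => hh.2
  obtain ⟨E, hE⟩ := exists_maximal_orthonormal_subset (orth S)
  obtain ⟨A, hA, hAmono, hEA, hAperp⟩ := hE.1.1.exists_dagMono_span hbip H2
  have hAS : ∀ s ∈ S, hA ≫ dag s = 0 := fun s hs => hAperp _ fun e he => hE.1.2 he s hs
  obtain ⟨B, hB, hBmono, hAB, hcolim⟩ := H3 A X hA hAmono
  have hbiprod : IsDagBiprod hA hB := ⟨hAmono, hBmono, hAB, hcolim⟩
  have hM := mem_orth_iff_of_maximal hI.1 hnorm hE hbiprod hEA hAS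
  refine ⟨A, B, hA, hB, hAmono, hBmono, hAB, hcolim, hM, fun w => ?_, fun u => ?_,
    fun w hw => ?_, fun w => ⟨_, _, hbiprod.eq_daggerAdd w⟩⟩
  · rw [← hbiprod.forall_comp_dag_comp_eq_zero_iff
      fun _ => eq_zero_of_comp_dag_self_eq_zero hI.1 hnorm]
    refine ⟨fun hw u => hw _ ((hM _).mpr ⟨u, rfl⟩), fun hw m hm => ?_⟩
    obtain ⟨u, rfl⟩ := (hM m).mp hm
    exact hw u
  · rw [Category.assoc, reassoc_of% hAmono]
  · rw [← Category.assoc, hw, zero_comp]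

/-- Under (H1)–(H4), every orthoclosed subspace `M = S⊥` of `V(X)` arises from a
dagger biproduct `A → X ← B` with `M = image V(h_A)`, `M⊥ = image V(h_B)`;
`V(h_A ∘ h_A†)` is the orthogonal projection onto `M`, and `V(X) = M ⊕ M⊥`, so
`V(X)` is orthomodular. -/
theorem stmt_17 {C : Type u} [Category.{v} C] [HasZeroObject C] [HasZeroMorphisms C]
    [HasBinaryBiproducts C] [DaggerStruct C]
    (hbip : ∀ X Y : C, DaggerStruct.dag (biprod.inl : X ⟶ X ⊞ Y) = biprod.fst ∧
        DaggerStruct.dag (biprod.inr : Y ⟶ X ⊞ Y) = biprod.snd)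
    (H2 : ∀ (J : Type v) [Preorder J] [IsDirected J (· ≤ ·)] [Nonempty J] (F : J ⥤ C),
      (∀ (i j : J) (h : i ≤ j), IsDagMono (F.map (homOfLE h))) →
      ∃ (X : C) (c : ∀ j : J, F.obj j ⟶ X),
        (∀ j, IsDagMono (c j)) ∧
        (∀ (i j : J) (h : i ≤ j), F.map (homOfLE h) ≫ c j = c i) ∧
        (∀ (Y : C) (d : ∀ j : J, F.obj j ⟶ Y), (∀ j, IsDagMono (d j)) →
          (∀ (i j : J) (h : i ≤ j), F.map (homOfLE h) ≫ d j = d i) →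
          ∃! m : X ⟶ Y, IsDagMono m ∧ ∀ j, c j ≫ m = d j) ∧
        (∀ (Y : C) (f g : X ⟶ Y), (∀ j, c j ≫ f = c j ≫ g) → f = g))
    (H3 : ∀ (A X : C) (f : A ⟶ X), IsDagMono f →
      ∃ (B : C) (g : B ⟶ X), IsDagMono g ∧ f ≫ DaggerStruct.dag g = 0 ∧
        Nonempty (IsColimit (BinaryCofan.mk f g)))
    (I : C) (hI : DagSimple I)
    (H4a : ∀ A : C, ¬ IsZero A → ∃ u : I ⟶ A, u ≠ 0)
    (H4b : ∀ (A : C) (u : I ⟶ A), u ≠ 0 → ∃ h : I ⟶ I, IsIso h ∧ IsDagMono (h ≫ u))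
    (X : C) (S : Set (I ⟶ X)) :
    ∃ (A B : C) (hA : A ⟶ X) (hB : B ⟶ X),
      -- A →hA X ←hB B is a dagger biproduct
      IsDagMono hA ∧ IsDagMono hB ∧ hA ≫ DaggerStruct.dag hB = 0 ∧
      Nonempty (IsColimit (BinaryCofan.mk hA hB)) ∧
      -- M = S⊥ = image V(hA)
      (∀ w : I ⟶ X, (∀ s ∈ S, w ≫ DaggerStruct.dag s = 0) ↔ ∃ u : I ⟶ A, w = u ≫ hA) ∧
      -- M⊥ = image V(hB)
      (∀ w : I ⟶ X,
        (∀ m : I ⟶ X, (∀ s ∈ S, m ≫ DaggerStruct.dag s = 0) → w ≫ DaggerStruct.dag m = 0)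
          ↔ ∃ v : I ⟶ B, w = v ≫ hB) ∧
      -- V(hA ∘ hA†) is the orthogonal projection onto M:
      -- it fixes M and annihilates M⊥
      (∀ u : I ⟶ A, (u ≫ hA) ≫ (DaggerStruct.dag hA ≫ hA) = u ≫ hA) ∧
      (∀ w : I ⟶ X, w ≫ DaggerStruct.dag hA = 0 → w ≫ (DaggerStruct.dag hA ≫ hA) = 0) ∧
      -- splitting (orthomodularity): V(X) = M ⊕ M⊥
      (∀ w : I ⟶ X, ∃ (u : I ⟶ A) (v : I ⟶ B),
        w = daggerAdd (u ≫ hA) (v ≫ hB)) :=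
  stmt_17_general hbip H2 H3 I hI H4b X S
end
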